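/- Let 𝔥 be a ℂ-linear subspace of ℂ^m such that Re restricted to 𝔥 is injective, and let 𝔣 ⊆ ℝ^m be a real subspace such that the quotient map q : ℝ^m → ℝ^m/Re(𝔥) restricts to a bijection from 𝔣 onto ℝ^m/Re(𝔥). Then ℂ^m is the internal direct sum of real subspaces ℝ^m ⊕ √−1·𝔣 ⊕ 𝔥: every w ∈ ℂ^m can be written uniquely as w = u + √−1·v + h with u ∈ ℝ^m, v ∈ 𝔣, and h ∈ 𝔥. -/

import Mathlib

/-! Multiplication by `√−1` preserves `𝔥` and turns imaginary parts into real parts, so `Im` is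
injective on `𝔥` and `Im(𝔥) = Re(𝔥)`, while the hypothesis on `𝔣` says that `𝔣` is a complement
of `Re(𝔥)` in `ℝ^m`. Taking imaginary parts in `w = u + √−1·v + h` gives `Im w = v + Im h`,
which determines `v` and `Im h`, hence `h`, and then `u = Re w - Re h`. -/

/-- The real-part projection `ℂ^m → ℝ^m`, as an `ℝ`-linear map. -/
noncomputable def reLinear (m : ℕ) : (Fin m → ℂ) →ₗ[ℝ] (Fin m → ℝ) :=
  LinearMap.pi fun i => Complex.reLm.comp (LinearMap.proj (R := ℝ) i)

/-- `Re(𝔥)` as a real subspace of `ℝ^m`. -/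
noncomputable def reSub {m : ℕ} (𝔥 : Submodule ℂ (Fin m → ℂ)) : Submodule ℝ (Fin m → ℝ) :=
  (𝔥.restrictScalars ℝ).map (reLinear m)

theorem Submodule.isCompl_of_bijective_mkQ_comp_subtype {R M : Type*} [Ring R] [AddCommGroup M]
    [Module R M] {p q : Submodule R M} (h : Function.Bijective (p.mkQ ∘ₗ q.subtype)) :
    IsCompl q p := by
  constructor
  · rw [Submodule.disjoint_def]
    intro x hxq hxp
    have : (p.mkQ ∘ₗ q.subtype) ⟨x, hxq⟩ = (p.mkQ ∘ₗ q.subtype) 0 := by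
      simpa [Submodule.Quotient.mk_eq_zero] using hxp
    simpa using congrArg Subtype.val (h.1 this)
  · rw [codisjoint_iff, eq_top_iff]
    intro x _
    obtain ⟨y, hy⟩ := h.2 (p.mkQ x)
    have hxy : x - y ∈ p := by simpa [Submodule.Quotient.eq] using hy.symm
    simpa using Submodule.add_mem_sup y.2 hxy

noncomputable def imLinear (m : ℕ) : (Fin m → ℂ) →ₗ[ℝ] (Fin m → ℝ) :=
  LinearMap.pi fun i => Complex.imLm.comp (LinearMap.proj (R := ℝ) i)

section

variable {m : ℕ}

@[simp]
theorem reLinear_apply (x : Fin m → ℂ) (j : Fin m) : reLinear m x j = (x j).re := rfl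

@[simp]
theorem imLinear_apply (x : Fin m → ℂ) (j : Fin m) : imLinear m x j = (x j).im := rfl

theorem reLinear_I_smul (x : Fin m → ℂ) : reLinear m (Complex.I • x) = -imLinear m x := by
  ext j; simp

theorem imLinear_I_smul (x : Fin m → ℂ) : imLinear m (Complex.I • x) = reLinear m x := by
  ext j; simp

theorem reSub_eq_map_imLinear (𝔥 : Submodule ℂ (Fin m → ℂ)) :
    reSub 𝔥 = (𝔥.restrictScalars ℝ).map (imLinear m) := by
  ext x
  constructor
  · rintro ⟨h, hh, rfl⟩
    exact ⟨Complex.I • h, 𝔥.smul_mem _ hh, imLinear_I_smul h⟩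
  · rintro ⟨h, hh, rfl⟩
    refine ⟨-(Complex.I • h), neg_mem (𝔥.smul_mem _ hh), ?_⟩
    rw [map_neg, reLinear_I_smul, neg_neg]

theorem injOn_imLinear {𝔥 : Submodule ℂ (Fin m → ℂ)}
    (hre : Set.InjOn (reLinear m) (𝔥 : Set (Fin m → ℂ))) :
    Set.InjOn (imLinear m) (𝔥 : Set (Fin m → ℂ)) := by
  intro x hx y hy hxy
  have : Complex.I • x = Complex.I • y :=
    hre (𝔥.smul_mem _ hx) (𝔥.smul_mem _ hy) (by rw [reLinear_I_smul, reLinear_I_smul, hxy])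
  exact smul_right_injective _ Complex.I_ne_zero this

theorem eq_ofReal_add_I_mul_ofReal_add_iff (w h : Fin m → ℂ) (u v : Fin m → ℝ) :
    w = (fun j => ((u j : ℝ) : ℂ)) + (fun j => Complex.I * ((v j : ℝ) : ℂ)) + h ↔
      reLinear m w = u + reLinear m h ∧ imLinear m w = v + imLinear m h := by
  simp only [funext_iff, Complex.ext_iff, forall_and]
  simp

end

/-- Let `𝔥` be a complex subspace of `ℂ^m` with `Re` injective on `𝔥`, and
let `𝔣 ⊆ ℝ^m` be a real subspace such that the quotient map `q : ℝ^m → ℝ^m/Re(𝔥)` restricts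
to a bijection from `𝔣` onto `ℝ^m/Re(𝔥)`. Then `ℂ^m = ℝ^m ⊕ √−1·𝔣 ⊕ 𝔥` as an internal
direct sum of real subspaces: every `w ∈ ℂ^m` is uniquely `w = u + √−1·v + h` with
`u ∈ ℝ^m`, `v ∈ 𝔣`, `h ∈ 𝔥`. -/
theorem decomposition_real_if_fan {m : ℕ} (𝔥 : Submodule ℂ (Fin m → ℂ))
    (hre : Set.InjOn (reLinear m) (𝔥 : Set (Fin m → ℂ)))
    (𝔣 : Submodule ℝ (Fin m → ℝ))
    (hbij : Function.Bijective ((reSub 𝔥).mkQ.comp 𝔣.subtype)) :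
    ∀ w : Fin m → ℂ, ∃! uvh : (Fin m → ℝ) × (Fin m → ℝ) × (Fin m → ℂ),
      uvh.2.1 ∈ 𝔣 ∧ uvh.2.2 ∈ 𝔥 ∧
      w = (fun j => ((uvh.1 j : ℝ) : ℂ)) + (fun j => Complex.I * ((uvh.2.1 j : ℝ) : ℂ))
            + uvh.2.2 := by
  intro w
  have hcompl := Submodule.isCompl_of_bijective_mkQ_comp_subtype hbij
  rw [reSub_eq_map_imLinear] at hcompl
  obtain ⟨⟨v, hv⟩, ⟨_, h, hh, rfl⟩, hsum, huniq⟩ :=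
    Submodule.existsUnique_add_of_isCompl hcompl (imLinear m w)
  refine ⟨(reLinear m w - reLinear m h, v, h), ⟨hv, hh,
    (eq_ofReal_add_I_mul_ofReal_add_iff _ _ _ _).2 ⟨(sub_add_cancel _ _).symm, hsum.symm⟩⟩, ?_⟩
  rintro ⟨u', v', h'⟩ ⟨hv', hh', hw⟩
  rw [eq_ofReal_add_I_mul_ofReal_add_iff] at hw
  obtain ⟨hvv, hhh⟩ := huniq ⟨v', hv'⟩ ⟨imLinear m h', h', hh', rfl⟩ hw.2.symm
  obtain rfl : h' = h := injOn_imLinear hre hh' hh (congrArg Subtype.val hhh)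
  obtain rfl : v' = v := congrArg Subtype.val hvv
  simp [hw.1]
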